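/- arXiv:1602.08294 — 7 statements merged into one kernel-verified Lean document; each statement's English description precedes it below -/
import Mathlib

section
/- Let a, b₁, b₂, γ be positive reals and c a real parameter satisfying the Routh–Hurwitz hypothesis: A > 0, A(B − c²) > C − c²(b₁+b₂), D > c²b₁b₂, and (C − c²(b₁+b₂))·(A(B − c²) − (C − c²(b₁+b₂))) > A²(D − c²b₁b₂). If the quartic h(z) = z⁴ + Pz³ + Qz² + Rz + S has no root in (0, ∞), then for every delay τ ≥ 0, every complex root λ of Δ_{c,τ}(λ) = 0 satisfies Re λ < 0. -/
noncomputable section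

open Real

/-- A = b₁+b₂+2a -/
def Ac (a b1 b2 : ℝ) : ℝ := b1 + b2 + 2*a
/-- B = 2a(b₁+b₂)+a²+b₁b₂+2γ -/
def Bc (a b1 b2 γ : ℝ) : ℝ := 2*a*(b1+b2) + a^2 + b1*b2 + 2*γ
/-- C = (a+b₁)(ab₂+γ)+(a+b₂)(ab₁+γ) -/
def Cc (a b1 b2 γ : ℝ) : ℝ := (a+b1)*(a*b2+γ) + (a+b2)*(a*b1+γ)
/-- D = (ab₁+γ)(ab₂+γ) -/
def Dc (a b1 b2 γ : ℝ) : ℝ := (a*b1+γ)*(a*b2+γ)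
/-- P = A² − 2B -/
def Pc (a b1 b2 γ : ℝ) : ℝ := (Ac a b1 b2)^2 - 2*(Bc a b1 b2 γ)
/-- Q = B² + 2D − 2AC − c⁴ -/
def Qc (a b1 b2 γ c : ℝ) : ℝ :=
  (Bc a b1 b2 γ)^2 + 2*(Dc a b1 b2 γ) - 2*(Ac a b1 b2)*(Cc a b1 b2 γ) - c^4
/-- R = C² − 2BD − c⁴(b₁²+b₂²) -/
def Rc (a b1 b2 γ c : ℝ) : ℝ :=
  (Cc a b1 b2 γ)^2 - 2*(Bc a b1 b2 γ)*(Dc a b1 b2 γ) - c^4*(b1^2+b2^2)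
/-- S = D² − c⁴b₁²b₂² -/
def Sc (a b1 b2 γ c : ℝ) : ℝ := (Dc a b1 b2 γ)^2 - c^4*b1^2*b2^2
/-- h(z) = z⁴ + Pz³ + Qz² + Rz + S -/
def hq (a b1 b2 γ c z : ℝ) : ℝ :=
  z^4 + Pc a b1 b2 γ*z^3 + Qc a b1 b2 γ c*z^2 + Rc a b1 b2 γ c*z + Sc a b1 b2 γ c
/-- h′(z) = 4z³ + 3Pz² + 2Qz + R -/
def hq' (a b1 b2 γ c z : ℝ) : ℝ :=
  4*z^3 + 3*(Pc a b1 b2 γ)*z^2 + 2*(Qc a b1 b2 γ c)*z + Rc a b1 b2 γ c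
/-- The characteristic function Δ_{c,τ}(λ) of the linearization at the trivial equilibrium. -/
def charFun (a b1 b2 γ c τ : ℝ) (lam : ℂ) : ℂ :=
  (lam^2 + (a+b1 : ℝ)*lam + (a*b1+γ : ℝ)) * (lam^2 + (a+b2 : ℝ)*lam + (a*b2+γ : ℝ))
    - (c^2 : ℝ) * (lam + (b1 : ℝ)) * (lam + (b2 : ℝ)) * Complex.exp ((-2) * lam * (τ : ℝ))
/-- N(ω) = c²[(b₁+b₂)²ω² + (ω²−b₁b₂)²] -/
def Nfun (b1 b2 c ω : ℝ) : ℝ := c^2*((b1+b2)^2*ω^2 + (ω^2 - b1*b2)^2)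
/-- a*(ω) -/
def aStar (a b1 b2 γ c ω : ℝ) : ℝ :=
  ((ω^4 - Bc a b1 b2 γ*ω^2 + Dc a b1 b2 γ)*(b1+b2)*ω
    + (Ac a b1 b2*ω^3 - Cc a b1 b2 γ*ω)*(b1*b2 - ω^2)) / Nfun b1 b2 c ω
/-- b*(ω) -/
def bStar (a b1 b2 γ c ω : ℝ) : ℝ :=
  ((ω^4 - Bc a b1 b2 γ*ω^2 + Dc a b1 b2 γ)*(b1*b2 - ω^2)
    + (-(Ac a b1 b2)*ω^3 + Cc a b1 b2 γ*ω)*(b1+b2)*ω) / Nfun b1 b2 c ω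
/-- the critical delays τ^{(j)}(ω) -/
def tauJ (a b1 b2 γ c : ℝ) (j : ℕ) (ω : ℝ) : ℝ :=
  if 0 ≤ aStar a b1 b2 γ c ω then
    (1/(2*ω)) * (Real.arccos (bStar a b1 b2 γ c ω) + 2*(j:ℝ)*Real.pi)
  else
    (1/(2*ω)) * (2*Real.pi - Real.arccos (bStar a b1 b2 γ c ω) + 2*(j:ℝ)*Real.pi)

/-!
Write `Δ_{c,τ}(λ) = F(λ) - G(λ) e^{-2λτ}`, where `F` is the product of the characteristic
polynomials of the two uncoupled FitzHugh–Nagumo units and `G(λ) = c²(λ+b₁)(λ+b₂)`. The quadratic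
factors of `F` have no zeros in the closed right half-plane, so `g = G / F` is holomorphic there and
tends to `0` at infinity. On the imaginary axis `|F(iω)|² - |G(iω)|² = h(ω²)`, which is positive
since `h(0) = S > 0` and `h` has no positive root; hence `|g(iω)| < 1`. By Phragmén–Lindelöf and the
maximum modulus principle `|g| < 1` on the closed right half-plane, whereas a root `λ` with
`Re λ ≥ 0` would give `|g(λ)| = e^{2τ Re λ} ≥ 1`.
-/

open Complex Filter Topology

theorem norm_lt_of_tendsto_zero_right_half_plane {E : Type*} [NormedAddCommGroup E]
    [NormedSpace ℂ E] {f : ℂ → E} {C : ℝ} (hd : DiffContOnCl ℂ f {z | 0 < z.re})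
    (hlim : Tendsto f (Bornology.cobounded ℂ ⊓ 𝓟 {z | 0 < z.re}) (𝓝 0))
    (him : ∀ y : ℝ, ‖f (y * I)‖ < C) {z : ℂ} (hz : 0 ≤ z.re) : ‖f z‖ < C := by
  have hreal : Tendsto (fun x : ℝ => f x) atTop (𝓝 0) :=
    hlim.comp <| tendsto_inf.2 ⟨RCLike.tendsto_ofReal_atTop_cobounded ℂ,
      tendsto_principal.2 <| (eventually_gt_atTop 0).mono fun x hx => by simpa using hx⟩
  have hle : ∀ w : ℂ, 0 ≤ w.re → ‖f w‖ ≤ C := fun w hw =>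
    PhragmenLindelof.right_half_plane_of_tendsto_zero_on_real hd
      ⟨0, two_pos, 0, by simpa using hlim.isBigO_one ℝ⟩ hreal (fun y => (him y).le) hw
  rcases hz.eq_or_lt with hz0 | hzpos
  · have hzI : z = z.im * I := Complex.ext (by simp [← hz0]) (by simp)
    exact hzI ▸ him z.im
  refine (hle z hz).lt_of_ne fun hzC => ?_
  -- `‖f‖` would attain its maximum at an interior point, hence be constant, hence `0`.
  have hconst := Complex.norm_eqOn_of_isPreconnected_of_isMaxOn
    (convex_halfSpace_re_gt 0).isPreconnected (isOpen_lt continuous_const continuous_re)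
    hd.differentiableOn hzpos (fun w hw => by simpa [hzC] using hle w (le_of_lt hw))
  have hC : C = 0 := by
    have hconst_real : Tendsto (fun x : ℝ => ‖f x‖) atTop (𝓝 C) :=
      tendsto_const_nhds.congr' <| (eventually_gt_atTop 0).mono fun x hx => by
        simpa [hzC] using (hconst (show (0 : ℝ) < (x : ℂ).re by simpa using hx)).symm
    exact tendsto_nhds_unique hconst_real (by simpa using hreal.norm)
  exact (norm_nonneg _).not_gt (by simpa [hC] using him 0)

theorem pos_of_pos_at_zero_of_ne_zero_on_Ioi {f : ℝ → ℝ} (hf : Continuous f) (h0 : 0 < f 0)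
    (hne : ∀ x, 0 < x → f x ≠ 0) {x : ℝ} (hx : 0 ≤ x) : 0 < f x := by
  by_contra! hfx
  obtain ⟨y, hy, hfy⟩ := intermediate_value_Icc' hx hf.continuousOn ⟨hfx, h0.le⟩
  rcases hy.1.eq_or_lt with rfl | hypos
  exacts [h0.ne' hfy, hne y hypos hfy]

theorem quadratic_ne_zero_of_re_nonneg {s p : ℝ} (hs : 0 < s) (hp : 0 < p) {z : ℂ}
    (hz : 0 ≤ z.re) : z ^ 2 + s * z + p ≠ 0 := by
  intro h
  have hre := congrArg re h
  have him := congrArg im h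
  simp only [add_re, add_im, mul_re, mul_im, pow_two, ofReal_re, ofReal_im, zero_re,
    zero_im] at hre him
  have hy : z.im = 0 := by
    have : z.im * (2 * z.re + s) = 0 := by linarith
    exact (mul_eq_zero.1 this).resolve_right (by positivity)
  rw [hy] at hre
  nlinarith

theorem normSq_quadratic_mul_I (s p ω : ℝ) :
    normSq ((ω * I) ^ 2 + s * (ω * I) + p) = (p - ω ^ 2) ^ 2 + s ^ 2 * ω ^ 2 := by
  have h : (ω * I) ^ 2 + s * (ω * I) + p = ((p - ω ^ 2 : ℝ) : ℂ) + ((s * ω : ℝ) : ℂ) * I := by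
    push_cast
    linear_combination (ω : ℂ) ^ 2 * I_sq
  rw [h, normSq_add_mul_I]
  ring

theorem normSq_mul_I_add_ofReal (b ω : ℝ) : normSq (ω * I + b) = ω ^ 2 + b ^ 2 := by
  rw [add_comm, normSq_add_mul_I]
  ring

theorem norm_le_norm_add_ofReal {z : ℂ} (hz : 0 ≤ z.re) {b : ℝ} (hb : 0 ≤ b) :
    ‖z‖ ≤ ‖z + b‖ := by
  rw [← sq_le_sq₀ (norm_nonneg _) (norm_nonneg _), Complex.sq_norm, Complex.sq_norm]
  simp only [normSq_apply, add_re, add_im, ofReal_re, ofReal_im]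
  nlinarith

def fhnCharPoly (a b γ : ℝ) (z : ℂ) : ℂ := z ^ 2 + (a + b : ℝ) * z + (a * b + γ : ℝ)

def uncoupledCharPoly (a b1 b2 γ : ℝ) (z : ℂ) : ℂ := fhnCharPoly a b1 γ z * fhnCharPoly a b2 γ z

def delayGain (a b1 b2 γ c : ℝ) (z : ℂ) : ℂ :=
  (c ^ 2 : ℝ) * (z + b1) * (z + b2) / uncoupledCharPoly a b1 b2 γ z

theorem charFun_eq (a b1 b2 γ c τ : ℝ) (z : ℂ) :
    charFun a b1 b2 γ c τ z = uncoupledCharPoly a b1 b2 γ z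
      - (c ^ 2 : ℝ) * (z + b1) * (z + b2) * exp (-2 * z * τ) := rfl

theorem fhnCharPoly_ne_zero {a b γ : ℝ} (ha : 0 < a) (hb : 0 < b) (hγ : 0 < γ) {z : ℂ}
    (hz : 0 ≤ z.re) : fhnCharPoly a b γ z ≠ 0 :=
  quadratic_ne_zero_of_re_nonneg (by positivity) (by positivity) hz

theorem uncoupledCharPoly_ne_zero {a b1 b2 γ : ℝ} (ha : 0 < a) (hb1 : 0 < b1) (hb2 : 0 < b2)
    (hγ : 0 < γ) {z : ℂ} (hz : 0 ≤ z.re) : uncoupledCharPoly a b1 b2 γ z ≠ 0 :=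
  mul_ne_zero (fhnCharPoly_ne_zero ha hb1 hγ hz) (fhnCharPoly_ne_zero ha hb2 hγ hz)

theorem sq_norm_sub_abs_le_norm_fhnCharPoly {a b : ℝ} (γ : ℝ) (ha : 0 ≤ a) (hb : 0 ≤ b)
    {z : ℂ} (hz : 0 ≤ z.re) : ‖z‖ ^ 2 - |γ| ≤ ‖fhnCharPoly a b γ z‖ := by
  have hfactor : fhnCharPoly a b γ z = (z + a) * (z + b) + γ := by
    simp only [fhnCharPoly]; push_cast; ring
  have hprod : ‖z‖ ^ 2 ≤ ‖(z + a) * (z + b)‖ := by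
    rw [norm_mul, sq]
    exact mul_le_mul (norm_le_norm_add_ofReal hz ha) (norm_le_norm_add_ofReal hz hb)
      (norm_nonneg _) (norm_nonneg _)
  have htri : ‖(z + a) * (z + b)‖ ≤ ‖fhnCharPoly a b γ z‖ + |γ| := by
    simpa [hfactor] using norm_sub_le (fhnCharPoly a b γ z) γ
  linarith

theorem norm_delayGain_le {a b1 b2 : ℝ} (γ c : ℝ) (ha : 0 ≤ a) (hb1 : 0 ≤ b1) (hb2 : 0 ≤ b2)
    {z : ℂ} (hz : 0 ≤ z.re) (hR : b1 + b2 + 2 * |γ| + 1 ≤ ‖z‖) :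
    ‖delayGain a b1 b2 γ c z‖ ≤ 16 * c ^ 2 / ‖z‖ ^ 2 := by
  set r := ‖z‖
  have hr : 0 < r := by linarith [abs_nonneg γ]
  have hγr : 2 * |γ| ≤ r ^ 2 := by nlinarith [abs_nonneg γ]
  have hquad : ∀ b : ℝ, 0 ≤ b → r ^ 2 / 2 ≤ ‖fhnCharPoly a b γ z‖ := fun b hb => by
    linarith [sq_norm_sub_abs_le_norm_fhnCharPoly γ ha hb hz]
  have hlin : ∀ b : ℝ, 0 ≤ b → b ≤ r → ‖z + b‖ ≤ 2 * r := fun b hb hbr => by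
    linarith [norm_add_le z (b : ℂ), show ‖(b : ℂ)‖ = b by simp [abs_of_nonneg hb]]
  have hnum : ‖((c ^ 2 : ℝ) : ℂ) * (z + b1) * (z + b2)‖ ≤ c ^ 2 * (2 * r) * (2 * r) := by
    rw [norm_mul, norm_mul, norm_real, Real.norm_of_nonneg (sq_nonneg c)]
    gcongr
    exacts [hlin b1 hb1 (by linarith [abs_nonneg γ]), hlin b2 hb2 (by linarith [abs_nonneg γ])]
  have hden : r ^ 2 / 2 * (r ^ 2 / 2) ≤ ‖uncoupledCharPoly a b1 b2 γ z‖ := by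
    rw [uncoupledCharPoly, norm_mul]
    exact mul_le_mul (hquad b1 hb1) (hquad b2 hb2) (by positivity) (norm_nonneg _)
  calc ‖delayGain a b1 b2 γ c z‖
      ≤ c ^ 2 * (2 * r) * (2 * r) / (r ^ 2 / 2 * (r ^ 2 / 2)) := by
        rw [delayGain, norm_div]
        exact div_le_div₀ (by positivity) hnum (by positivity) hden
    _ = 16 * c ^ 2 / r ^ 2 := by field_simp; ring

theorem tendsto_delayGain {a b1 b2 : ℝ} (γ c : ℝ) (ha : 0 ≤ a) (hb1 : 0 ≤ b1) (hb2 : 0 ≤ b2) :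
    Tendsto (delayGain a b1 b2 γ c) (Bornology.cobounded ℂ ⊓ 𝓟 {z | 0 < z.re}) (𝓝 0) := by
  have hnorm : Tendsto (‖·‖) (Bornology.cobounded ℂ ⊓ 𝓟 {z | 0 < z.re}) atTop :=
    tendsto_norm_cobounded_atTop.mono_left inf_le_left
  refine squeeze_zero_norm' ?_
    ((tendsto_const_nhds (x := 16 * c ^ 2)).div_atTop ((tendsto_pow_atTop two_ne_zero).comp hnorm))
  filter_upwards [hnorm.eventually_ge_atTop (b1 + b2 + 2 * |γ| + 1),
    inf_le_right (α := Filter ℂ) (mem_principal_self _)] with z hR hz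
  exact norm_delayGain_le γ c ha hb1 hb2 (le_of_lt hz) hR

theorem diffContOnCl_delayGain {a b1 b2 γ : ℝ} (c : ℝ) (ha : 0 < a) (hb1 : 0 < b1)
    (hb2 : 0 < b2) (hγ : 0 < γ) :
    DiffContOnCl ℂ (delayGain a b1 b2 γ c) {z | 0 < z.re} := by
  refine DifferentiableOn.diffContOnCl fun z hz => ?_
  rw [closure_setOfPred_lt_re] at hz
  refine (DifferentiableAt.div (by fun_prop) ?_ ?_).differentiableWithinAt
  · unfold uncoupledCharPoly fhnCharPoly; fun_prop
  · exact uncoupledCharPoly_ne_zero ha hb1 hb2 hγ hz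

theorem normSq_uncoupledCharPoly_mul_I (a b1 b2 γ c ω : ℝ) :
    normSq (uncoupledCharPoly a b1 b2 γ (ω * I))
      = hq a b1 b2 γ c (ω ^ 2) + c ^ 4 * ((ω ^ 2 + b1 ^ 2) * (ω ^ 2 + b2 ^ 2)) := by
  rw [uncoupledCharPoly, map_mul, fhnCharPoly, fhnCharPoly, normSq_quadratic_mul_I,
    normSq_quadratic_mul_I]
  simp only [hq, Pc, Qc, Rc, Sc, Ac, Bc, Cc, Dc]
  ring

theorem norm_delayGain_mul_I_lt_one {a b1 b2 γ c ω : ℝ} (hpos : 0 < hq a b1 b2 γ c (ω ^ 2)) :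
    ‖delayGain a b1 b2 γ c (ω * I)‖ < 1 := by
  have hnormSq : normSq (delayGain a b1 b2 γ c (ω * I))
      = c ^ 4 * ((ω ^ 2 + b1 ^ 2) * (ω ^ 2 + b2 ^ 2))
        / (hq a b1 b2 γ c (ω ^ 2) + c ^ 4 * ((ω ^ 2 + b1 ^ 2) * (ω ^ 2 + b2 ^ 2))) := by
    rw [delayGain, map_div₀, map_mul, map_mul, normSq_ofReal, normSq_mul_I_add_ofReal,
      normSq_mul_I_add_ofReal, normSq_uncoupledCharPoly_mul_I a b1 b2 γ c]
    ring
  have hK : 0 ≤ c ^ 4 * ((ω ^ 2 + b1 ^ 2) * (ω ^ 2 + b2 ^ 2)) := by positivity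
  rw [← sq_lt_one_iff₀ (norm_nonneg _), Complex.sq_norm, hnormSq, div_lt_one (by positivity)]
  linarith

theorem one_le_norm_delayGain_of_charFun_eq_zero {a b1 b2 γ c τ : ℝ} {z : ℂ} (hτ : 0 ≤ τ)
    (hz : 0 ≤ z.re) (hF : uncoupledCharPoly a b1 b2 γ z ≠ 0)
    (hroot : charFun a b1 b2 γ c τ z = 0) : 1 ≤ ‖delayGain a b1 b2 γ c z‖ := by
  rw [charFun_eq, sub_eq_zero] at hroot
  have hG : ((c ^ 2 : ℝ) : ℂ) * (z + b1) * (z + b2) ≠ 0 := fun hG =>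
    hF (by rw [hroot, hG, zero_mul])
  have hgain : delayGain a b1 b2 γ c z = (exp (-2 * z * τ))⁻¹ := by
    rw [delayGain, hroot, div_mul_eq_div_div, div_self hG, one_div]
  rw [hgain, norm_inv, norm_exp, ← Real.exp_neg]
  have hre : -(-2 * z * τ).re = 2 * z.re * τ := by simp [mul_re]
  exact Real.one_le_exp (hre ▸ by positivity)

theorem hq_pos {a b1 b2 γ c : ℝ} (hb1 : 0 ≤ b1) (hb2 : 0 ≤ b2)
    (hD : Dc a b1 b2 γ > c ^ 2 * b1 * b2) (hnoroot : ∀ z : ℝ, 0 < z → hq a b1 b2 γ c z ≠ 0)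
    {z : ℝ} (hz : 0 ≤ z) : 0 < hq a b1 b2 γ c z := by
  have hS : 0 < hq a b1 b2 γ c 0 := by
    have hc : 0 ≤ c ^ 2 * b1 * b2 := by positivity
    have hfactor : hq a b1 b2 γ c 0
        = (Dc a b1 b2 γ - c ^ 2 * b1 * b2) * (Dc a b1 b2 γ + c ^ 2 * b1 * b2) := by
      simp only [hq, Sc]; ring
    rw [hfactor]
    exact mul_pos (by linarith) (by linarith)
  exact pos_of_pos_at_zero_of_ne_zero_on_Ioi (by unfold hq; fun_prop) hS hnoroot hz

theorem stmt1_general (a b1 b2 γ c : ℝ)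
    (ha : 0 < a) (hb1 : 0 < b1) (hb2 : 0 < b2) (hγ : 0 < γ)
    (hRH3 : Dc a b1 b2 γ > c^2*b1*b2)
    (hnoroot : ∀ z : ℝ, 0 < z → hq a b1 b2 γ c z ≠ 0) :
    ∀ τ : ℝ, 0 ≤ τ → ∀ lam : ℂ, charFun a b1 b2 γ c τ lam = 0 → lam.re < 0 := by
  intro τ hτ lam hroot
  by_contra! hre
  have hgain_lt_one : ‖delayGain a b1 b2 γ c lam‖ < 1 :=
    norm_lt_of_tendsto_zero_right_half_plane (diffContOnCl_delayGain c ha hb1 hb2 hγ)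
      (tendsto_delayGain γ c ha.le hb1.le hb2.le)
      (fun ω => norm_delayGain_mul_I_lt_one (hq_pos hb1.le hb2.le hRH3 hnoroot (sq_nonneg ω))) hre
  exact hgain_lt_one.not_ge <| one_le_norm_delayGain_of_charFun_eq_zero hτ hre
    (uncoupledCharPoly_ne_zero ha hb1 hb2 hγ hre) hroot

/-- Routh–Hurwitz hypothesis and h having no positive root imply
asymptotic stability (all characteristic roots in the open left half plane) for all delays τ ≥ 0. -/
theorem stmt1 (a b1 b2 γ c : ℝ)
    (ha : 0 < a) (hb1 : 0 < b1) (hb2 : 0 < b2) (hγ : 0 < γ)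
    (hRH1 : 0 < Ac a b1 b2)
    (hRH2 : Ac a b1 b2 * (Bc a b1 b2 γ - c^2) > Cc a b1 b2 γ - c^2*(b1+b2))
    (hRH3 : Dc a b1 b2 γ > c^2*b1*b2)
    (hRH4 : (Cc a b1 b2 γ - c^2*(b1+b2)) *
        (Ac a b1 b2 * (Bc a b1 b2 γ - c^2) - (Cc a b1 b2 γ - c^2*(b1+b2)))
      > (Ac a b1 b2)^2 * (Dc a b1 b2 γ - c^2*b1*b2))
    (hnoroot : ∀ z : ℝ, 0 < z → hq a b1 b2 γ c z ≠ 0) :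
    ∀ τ : ℝ, 0 ≤ τ → ∀ lam : ℂ, charFun a b1 b2 γ c τ lam = 0 → lam.re < 0 :=
  stmt1_general a b1 b2 γ c ha hb1 hb2 hγ hRH3 hnoroot
end
end

section
/- Let a, b₁, b₂, γ be positive reals and c, τ real parameters. If ω is a real number such that iω is a root of Δ_{c,τ}, then ω² is a root of the quartic h, i.e. ω⁸ + Pω⁶ + Qω⁴ + Rω² + S = 0. -/
noncomputable section

open Real

/-- if iω is a root of Δ_{c,τ}, then ω² is a root of the quartic h. -/
theorem stmt4 (a b1 b2 γ c τ : ℝ)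
    (ha : 0 < a) (hb1 : 0 < b1) (hb2 : 0 < b2) (hγ : 0 < γ) (ω : ℝ)
    (hroot : charFun a b1 b2 γ c τ (Complex.I * (ω : ℂ)) = 0) :
    ω^8 + Pc a b1 b2 γ*ω^6 + Qc a b1 b2 γ c*ω^4 + Rc a b1 b2 γ c*ω^2
      + Sc a b1 b2 γ c = 0 := by
  set lam : ℂ := Complex.I * (ω : ℂ) with hlam
  have heq : (lam^2 + ((a+b1 : ℝ):ℂ)*lam + ((a*b1+γ : ℝ):ℂ))
      * (lam^2 + ((a+b2 : ℝ):ℂ)*lam + ((a*b2+γ : ℝ):ℂ))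
      = ((c^2 : ℝ):ℂ) * (lam + (b1:ℝ)) * (lam + (b2:ℝ)) * Complex.exp ((-2) * lam * (τ:ℝ)) :=
    sub_eq_zero.mp hroot
  have hL : (lam^2 + ((a+b1 : ℝ):ℂ)*lam + ((a*b1+γ : ℝ):ℂ))
      * (lam^2 + ((a+b2 : ℝ):ℂ)*lam + ((a*b2+γ : ℝ):ℂ))
      = ((ω^4 - Bc a b1 b2 γ*ω^2 + Dc a b1 b2 γ : ℝ):ℂ)
        + ((-(Ac a b1 b2)*ω^3 + Cc a b1 b2 γ*ω : ℝ):ℂ) * Complex.I := by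
    simp only [hlam, Ac, Bc, Cc, Dc]
    push_cast
    ring_nf
    simp only [show Complex.I^3 = -Complex.I from by rw [pow_succ, Complex.I_sq]; ring,
      show Complex.I^4 = 1 from by rw [show (4:ℕ)=2*2 from rfl, pow_mul, Complex.I_sq]; norm_num,
      Complex.I_sq]
    ring
  have hM : (lam + (b1:ℝ)) * (lam + (b2:ℝ))
      = ((b1*b2 - ω^2 : ℝ):ℂ) + (((b1+b2)*ω : ℝ):ℂ) * Complex.I := by
    simp only [hlam]
    push_cast
    ring_nf
    rw [Complex.I_sq]
    ring
  have hE : Complex.normSq (Complex.exp ((-2) * lam * (τ:ℝ))) = 1 := by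
    rw [← Complex.sq_norm, Complex.norm_exp]
    simp [hlam]
  have hNS := congrArg Complex.normSq heq
  rw [hL] at hNS
  rw [show ((c^2 : ℝ):ℂ) * (lam + (b1:ℝ)) * (lam + (b2:ℝ)) * Complex.exp ((-2) * lam * (τ:ℝ))
      = (((c^2:ℝ):ℂ) * ((lam + (b1:ℝ)) * (lam + (b2:ℝ)))) * Complex.exp ((-2) * lam * (τ:ℝ)) by ring,
    Complex.normSq_mul, hE, mul_one, Complex.normSq_mul, hM] at hNS
  rw [Complex.normSq_add_mul_I, Complex.normSq_add_mul_I] at hNS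
  simp only [Complex.normSq_ofReal] at hNS
  simp only [Pc, Qc, Rc, Sc, Ac, Bc, Cc, Dc] at *
  linear_combination hNS
end
end

section
/- Let a, b₁, b₂, γ be positive reals, c ≠ 0 and τ real parameters, and ω > 0. If iω is a root of Δ_{c,τ}, then sin(2τω) = a*(ω) and cos(2τω) = b*(ω). -/
noncomputable section

open Real

/-- if iω (ω > 0, c ≠ 0) is a root of Δ_{c,τ}, then
sin(2τω) = a*(ω) and cos(2τω) = b*(ω). -/
theorem stmt5 (a b1 b2 γ c τ : ℝ)
    (ha : 0 < a) (hb1 : 0 < b1) (hb2 : 0 < b2) (hγ : 0 < γ) (hc : c ≠ 0)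
    (ω : ℝ) (hω : 0 < ω)
    (hroot : charFun a b1 b2 γ c τ (Complex.I * (ω : ℂ)) = 0) :
    Real.sin (2*τ*ω) = aStar a b1 b2 γ c ω ∧
    Real.cos (2*τ*ω) = bStar a b1 b2 γ c ω := by
  set s := Real.sin (2*τ*ω) with hs
  set co := Real.cos (2*τ*ω) with hco
  have hN : Nfun b1 b2 c ω ≠ 0 := by
    have h1 : (0:ℝ) < (b1+b2)^2*ω^2 + (ω^2 - b1*b2)^2 := by
      nlinarith [sq_nonneg (ω^2 - b1*b2),
        mul_pos (mul_pos (add_pos hb1 hb2) (add_pos hb1 hb2)) (mul_pos hω hω)]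
    exact mul_ne_zero (pow_ne_zero 2 hc) (ne_of_gt h1)
  unfold charFun at hroot
  have harg : ((-2 : ℂ)) * (Complex.I * (ω:ℂ)) * ((τ:ℝ):ℂ) = ((-(2*τ*ω) : ℝ) : ℂ) * Complex.I := by
    push_cast; ring
  rw [harg, Complex.exp_mul_I, ← Complex.ofReal_cos, ← Complex.ofReal_sin,
    Real.cos_neg, Real.sin_neg, ← hs, ← hco] at hroot
  have key : ((ω^4 - Bc a b1 b2 γ*ω^2 + Dc a b1 b2 γ
        - c^2*((b1*b2 - ω^2)*co + (b1+b2)*ω*s) : ℝ) : ℂ)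
      + ((Cc a b1 b2 γ*ω - Ac a b1 b2*ω^3
        - c^2*((b1+b2)*ω*co - (b1*b2 - ω^2)*s) : ℝ) : ℂ) * Complex.I = 0 := by
    rw [← hroot]
    simp only [Ac, Bc, Cc, Dc, Complex.ext_iff, Complex.add_re, Complex.add_im,
      Complex.sub_re, Complex.sub_im, Complex.mul_re, Complex.mul_im,
      Complex.ofReal_re, Complex.ofReal_im, Complex.I_re, Complex.I_im,
      Complex.neg_re, Complex.neg_im, Complex.ofReal_neg,
      pow_succ, pow_zero, one_mul]
    constructor <;> ring
  have hE1 : ω^4 - Bc a b1 b2 γ*ω^2 + Dc a b1 b2 γ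
      - c^2*((b1*b2 - ω^2)*co + (b1+b2)*ω*s) = 0 := by
    have h := congrArg Complex.re key
    simpa only [Complex.add_re, Complex.mul_re, Complex.ofReal_re, Complex.ofReal_im,
      Complex.I_re, Complex.I_im, Complex.zero_re, mul_zero, mul_one, zero_mul,
      sub_zero, add_zero, zero_sub, neg_zero] using h
  have hE2 : Cc a b1 b2 γ*ω - Ac a b1 b2*ω^3
      - c^2*((b1+b2)*ω*co - (b1*b2 - ω^2)*s) = 0 := by
    have h := congrArg Complex.im key
    simpa only [Complex.add_im, Complex.mul_im, Complex.ofReal_re, Complex.ofReal_im,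
      Complex.I_re, Complex.I_im, Complex.zero_im, mul_zero, mul_one, zero_mul,
      sub_zero, add_zero, zero_add, neg_zero] using h
  constructor
  · rw [aStar, eq_div_iff hN, Nfun]
    linear_combination (-((b1+b2)*ω)) * hE1 + (b1*b2 - ω^2) * hE2
  · rw [bStar, eq_div_iff hN, Nfun]
    linear_combination (-(b1*b2 - ω^2)) * hE1 - ((b1+b2)*ω) * hE2
end
end

section
/- Let a, b₁, b₂, γ be positive reals, c ≠ 0 a real parameter, and ω > 0. Then a*(ω)² + b*(ω)² = 1 if and only if h(ω²) = 0, i.e. if and only if ω⁸ + Pω⁶ + Qω⁴ + Rω² + S = 0. -/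
/-!
Put `u + i v = ω⁴ − Bω² + D + i(Cω − Aω³)`, the value at `λ = iω` of
`λ⁴ + Aλ³ + Bλ² + Cλ + D = (λ² + (a+b₁)λ + ab₁+γ)(λ² + (a+b₂)λ + ab₂+γ)`, and
`w = c²(iω + b₁)(iω + b₂)`. Then `N = |w|²/c²` and `N·(b* − i a*) = (u + i v)·conj w / c²`,
so `a*² + b*² = |u + i v|² / |w|²`, and `|u + i v|² − |w|²` is exactly `h(ω²)`.
-/

noncomputable section

open Real

section

variable {a b1 b2 γ c ω : ℝ}

theorem Nfun_eq : Nfun b1 b2 c ω = c ^ 2 * ((ω ^ 2 + b1 ^ 2) * (ω ^ 2 + b2 ^ 2)) := by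
  unfold Nfun; ring

theorem aStar_sq_add_bStar_sq (hc : c ≠ 0) (hω : ω ≠ 0) :
    aStar a b1 b2 γ c ω ^ 2 + bStar a b1 b2 γ c ω ^ 2 =
      ((ω ^ 4 - Bc a b1 b2 γ * ω ^ 2 + Dc a b1 b2 γ) ^ 2
          + (Ac a b1 b2 * ω ^ 3 - Cc a b1 b2 γ * ω) ^ 2)
        / (c ^ 4 * ((ω ^ 2 + b1 ^ 2) * (ω ^ 2 + b2 ^ 2))) := by
  rw [aStar, bStar, Nfun_eq, div_pow, div_pow, ← add_div, div_eq_div_iff (by positivity)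
    (by positivity)]
  ring

theorem sq_add_sq_sub_eq_hq :
    (ω ^ 4 - Bc a b1 b2 γ * ω ^ 2 + Dc a b1 b2 γ) ^ 2
        + (Ac a b1 b2 * ω ^ 3 - Cc a b1 b2 γ * ω) ^ 2
        - c ^ 4 * ((ω ^ 2 + b1 ^ 2) * (ω ^ 2 + b2 ^ 2)) = hq a b1 b2 γ c (ω ^ 2) := by
  unfold hq Pc Qc Rc Sc Ac Bc Cc Dc; ring

theorem hq_sq :
    hq a b1 b2 γ c (ω ^ 2) = ω ^ 8 + Pc a b1 b2 γ * ω ^ 6 + Qc a b1 b2 γ c * ω ^ 4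
      + Rc a b1 b2 γ c * ω ^ 2 + Sc a b1 b2 γ c := by
  unfold hq; ring

end

theorem stmt6_general (a b1 b2 γ c : ℝ)
    (hc : c ≠ 0)
    (ω : ℝ) (hω : 0 < ω) :
    aStar a b1 b2 γ c ω ^ 2 + bStar a b1 b2 γ c ω ^ 2 = 1 ↔
      ω^8 + Pc a b1 b2 γ*ω^6 + Qc a b1 b2 γ c*ω^4 + Rc a b1 b2 γ c*ω^2
        + Sc a b1 b2 γ c = 0 := by
  rw [aStar_sq_add_bStar_sq hc hω.ne', div_eq_one_iff_eq (by positivity), ← sub_eq_zero,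
    sq_add_sq_sub_eq_hq, hq_sq]

/-- a*(ω)² + b*(ω)² = 1 iff h(ω²) = 0. -/
theorem stmt6 (a b1 b2 γ c : ℝ)
    (ha : 0 < a) (hb1 : 0 < b1) (hb2 : 0 < b2) (hγ : 0 < γ) (hc : c ≠ 0)
    (ω : ℝ) (hω : 0 < ω) :
    aStar a b1 b2 γ c ω ^ 2 + bStar a b1 b2 γ c ω ^ 2 = 1 ↔
      ω^8 + Pc a b1 b2 γ*ω^6 + Qc a b1 b2 γ c*ω^4 + Rc a b1 b2 γ c*ω^2
        + Sc a b1 b2 γ c = 0 :=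
  stmt6_general a b1 b2 γ c hc ω hω
end
end

section
/- Let a, b₁, b₂, γ be positive reals, c ≠ 0 a real parameter, j a natural number, and ω > 0 a real number with h(ω²) = 0 and h′(ω²) ≠ 0; set τ* = τ^{(j)}(ω). If λ : ℝ → ℂ is differentiable on a neighborhood of τ* with λ(τ*) = iω and Δ_{c,τ}(λ(τ)) = 0 for all τ in that neighborhood, then the derivative of Re λ(τ) at τ = τ* is nonzero and has the same sign as h′(ω²). -/
noncomputable section

open Real

/-!
Write `Δ_{c,τ}(λ) = p(λ) − q(λ) e^{−2λτ}`. Differentiating `p(λ(τ)) = q(λ(τ)) e^{−2λ(τ)τ}` and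
eliminating the exponential gives `λ′ K = −2λ p q` with `K = p′q − pq′ + 2τpq`, so at `λ = iω`
multiplying by `conj K` yields `Re λ′ · |K|² = 2ω (|q|² Im(p p̄′) − |p|² Im(q q̄′))`.
Along the imaginary axis `|p(iω)|² − |q(iω)|² = h(ω²)`, and `Im(p p̄′)(iω) = ω · d|p(iω)|²/d(ω²)`,
so at a crossing (`|p| = |q|`) the right-hand side is `2ω² |q(iω)|² h′(ω²)`.
-/

open Complex Filter Topology ComplexConjugate

theorem HasDerivAt.mul_eq_of_eventuallyEq_mul_cexp {p q : ℂ → ℂ} {p' q' L κ : ℂ}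
    {lam : ℝ → ℂ} {τ₀ : ℝ} (hp : HasDerivAt p p' (lam τ₀)) (hq : HasDerivAt q q' (lam τ₀))
    (hlam : HasDerivAt lam L τ₀)
    (hroot : ∀ᶠ τ in 𝓝 τ₀, p (lam τ) = q (lam τ) * cexp (κ * lam τ * τ)) :
    L * (p' * q (lam τ₀) - p (lam τ₀) * q' - κ * τ₀ * p (lam τ₀) * q (lam τ₀))
      = κ * lam τ₀ * p (lam τ₀) * q (lam τ₀) := by
  have hexp : HasDerivAt (fun τ : ℝ => κ * lam τ * τ) (κ * L * τ₀ + κ * lam τ₀ * 1) τ₀ :=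
    (hlam.const_mul κ).mul (hasDerivAt_id τ₀).ofReal_comp
  have hF := (hp.comp τ₀ hlam).sub ((hq.comp τ₀ hlam).mul hexp.cexp)
  have hF0 := hF.unique ((hasDerivAt_const τ₀ (0 : ℂ)).congr_of_eventuallyEq
    (hroot.mono fun τ h => sub_eq_zero.mpr h))
  rw [Function.comp_apply] at hF0
  linear_combination q (lam τ₀) * hF0
    - (q' * L + κ * L * τ₀ * q (lam τ₀) + κ * lam τ₀ * q (lam τ₀)) * hroot.self_of_nhds

theorem re_mul_normSq_eq_of_mul_eq {L p p' q q' : ℂ} {κ τ ω : ℝ}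
    (h : L * (p' * q - p * q' - κ * τ * p * q) = κ * (I * ω) * p * q) :
    L.re * normSq (p' * q - p * q' - κ * τ * p * q)
      = -κ * ω * (normSq q * (p * conj p').im - normSq p * (q * conj q').im) := by
  set K := p' * q - p * q' - κ * τ * p * q with hK
  have hre : L.re * normSq K = (L * K * conj K).re := by
    rw [mul_assoc, mul_conj, re_mul_ofReal]
  rw [hre, h, hK]
  simp only [mul_re, mul_im, sub_re, sub_im, conj_re, conj_im, ofReal_re, ofReal_im, I_re, I_im,
    map_sub, map_mul, normSq_apply, conj_ofReal]
  ring

theorem mul_pos_of_mul_eq_pos_mul {x k m y : ℝ} (h : x * k = m * y) (hk : 0 ≤ k) (hm : 0 < m)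
    (hy : y ≠ 0) : 0 < x * y := by
  have hxyk : x * y * k = m * y ^ 2 := by linear_combination y * h
  exact pos_of_mul_pos_left (hxyk ▸ by positivity) hk

def charPolyP (a b1 b2 γ : ℝ) (z : ℂ) : ℂ :=
  (z^2 + (a+b1 : ℝ)*z + (a*b1+γ : ℝ)) * (z^2 + (a+b2 : ℝ)*z + (a*b2+γ : ℝ))

def charPolyP' (a b1 b2 γ : ℝ) (z : ℂ) : ℂ :=
  (2*z + (a+b1 : ℝ)) * (z^2 + (a+b2 : ℝ)*z + (a*b2+γ : ℝ))
    + (z^2 + (a+b1 : ℝ)*z + (a*b1+γ : ℝ)) * (2*z + (a+b2 : ℝ))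

def charPolyQ (b1 b2 c : ℝ) (z : ℂ) : ℂ := (c^2 : ℝ) * (z + (b1 : ℝ)) * (z + (b2 : ℝ))

def charPolyQ' (b1 b2 c : ℝ) (z : ℂ) : ℂ := (c^2 : ℝ) * (2*z + (b1 : ℝ) + (b2 : ℝ))

theorem charFun_eq_sub (a b1 b2 γ c τ : ℝ) (z : ℂ) :
    charFun a b1 b2 γ c τ z = charPolyP a b1 b2 γ z - charPolyQ b1 b2 c z * cexp (-2 * z * τ) :=
  rfl

theorem hasDerivAt_quadratic (β δ z : ℂ) :
    HasDerivAt (fun z => z^2 + β*z + δ) (2*z + β) z := by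
  simpa using (((hasDerivAt_id z).pow 2).add ((hasDerivAt_id z).const_mul β)).add_const δ

theorem hasDerivAt_charPolyP (a b1 b2 γ : ℝ) (z : ℂ) :
    HasDerivAt (charPolyP a b1 b2 γ) (charPolyP' a b1 b2 γ z) z :=
  (hasDerivAt_quadratic _ _ z).mul (hasDerivAt_quadratic _ _ z)

theorem hasDerivAt_charPolyQ (b1 b2 c : ℝ) (z : ℂ) :
    HasDerivAt (charPolyQ b1 b2 c) (charPolyQ' b1 b2 c z) z := by
  refine ((((hasDerivAt_id' z).add_const (b1 : ℂ)).const_mul ((c^2 : ℝ) : ℂ)).mul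
    ((hasDerivAt_id' z).add_const (b2 : ℂ))).congr_deriv ?_
  simp only [charPolyQ']
  ring

section ImaginaryAxis

variable (a b1 b2 γ c ω : ℝ)

theorem normSq_charPolyQ_I_mul :
    normSq (charPolyQ b1 b2 c (I * ω)) = c^4 * (ω^2 + b1^2) * (ω^2 + b2^2) := by
  simp only [charPolyQ, normSq_apply, mul_re, mul_im, add_re, add_im, I_re, I_im, ofReal_re,
    ofReal_im]
  ring

theorem normSq_charPolyP_I_mul :
    normSq (charPolyP a b1 b2 γ (I * ω))
      = hq a b1 b2 γ c (ω^2) + normSq (charPolyQ b1 b2 c (I * ω)) := by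
  rw [normSq_charPolyQ_I_mul]
  simp only [charPolyP, hq, Pc, Qc, Rc, Sc, Ac, Bc, Cc, Dc, normSq_apply, mul_re, mul_im,
    add_re, add_im, I_re, I_im, ofReal_re, ofReal_im, pow_two]
  ring

theorem im_charPolyP_mul_conj_deriv_I_mul :
    (charPolyP a b1 b2 γ (I * ω) * conj (charPolyP' a b1 b2 γ (I * ω))).im
      = ω * hq' a b1 b2 γ c (ω^2)
        + (charPolyQ b1 b2 c (I * ω) * conj (charPolyQ' b1 b2 c (I * ω))).im := by
  simp only [charPolyP, charPolyP', charPolyQ, charPolyQ', hq', Pc, Qc, Rc, Ac, Bc, Cc, Dc,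
    map_add, map_mul, map_ofNat, conj_ofReal, conj_I, mul_re, mul_im, add_re, add_im, neg_re,
    neg_im, I_re, I_im, ofReal_re, ofReal_im, pow_two, re_ofNat, im_ofNat]
  ring

end ImaginaryAxis

theorem exists_re_mul_normSq_eq_of_root_branch {a b1 b2 γ c ω τ₀ : ℝ} {lam : ℝ → ℂ} {L : ℂ}
    (hroot : hq a b1 b2 γ c (ω^2) = 0) (hlam : HasDerivAt lam L τ₀) (hval : lam τ₀ = I * ω)
    (hsol : ∀ᶠ τ in 𝓝 τ₀, charFun a b1 b2 γ c τ (lam τ) = 0) :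
    ∃ K : ℂ, L.re * normSq K
      = 2 * ω^2 * normSq (charPolyQ b1 b2 c (I * ω)) * hq' a b1 b2 γ c (ω^2) := by
  have hbranch := HasDerivAt.mul_eq_of_eventuallyEq_mul_cexp (κ := -2)
    (hasDerivAt_charPolyP a b1 b2 γ _) (hasDerivAt_charPolyQ b1 b2 c _) hlam
    (hsol.mono fun τ h => by rwa [charFun_eq_sub, sub_eq_zero] at h)
  rw [hval] at hbranch
  refine ⟨_, (re_mul_normSq_eq_of_mul_eq (κ := -2) (by exact_mod_cast hbranch)).trans ?_⟩
  have hnormSq : normSq (charPolyP a b1 b2 γ (I * ω)) = normSq (charPolyQ b1 b2 c (I * ω)) := by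
    rw [normSq_charPolyP_I_mul a b1 b2 γ c, hroot, zero_add]
  rw [hnormSq, im_charPolyP_mul_conj_deriv_I_mul a b1 b2 γ c]
  ring

theorem stmt9_general (a b1 b2 γ c : ℝ)
    (hc : c ≠ 0)
    (j : ℕ) (ω : ℝ) (hω : 0 < ω)
    (hroot : hq a b1 b2 γ c (ω^2) = 0) (hroot' : hq' a b1 b2 γ c (ω^2) ≠ 0)
    (lamf : ℝ → ℂ) (s : Set ℝ) (hs : s ∈ nhds (tauJ a b1 b2 γ c j ω))
    (hdiff : ∀ τ ∈ s, DifferentiableAt ℝ lamf τ)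
    (hval : lamf (tauJ a b1 b2 γ c j ω) = Complex.I * (ω : ℂ))
    (hsol : ∀ τ ∈ s, charFun a b1 b2 γ c τ (lamf τ) = 0) :
    deriv (fun τ => (lamf τ).re) (tauJ a b1 b2 γ c j ω) ≠ 0 ∧
    0 < deriv (fun τ => (lamf τ).re) (tauJ a b1 b2 γ c j ω) * hq' a b1 b2 γ c (ω^2) := by
  have hlam := (hdiff _ (mem_of_mem_nhds hs)).hasDerivAt
  have hre : HasDerivAt (fun τ => (lamf τ).re) _ _ := reCLM.hasFDerivAt.comp_hasDerivAt _ hlam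
  obtain ⟨K, hK⟩ := exists_re_mul_normSq_eq_of_root_branch hroot hlam hval
    (eventually_of_mem hs hsol)
  have hpos : 0 < deriv (fun τ => (lamf τ).re) (tauJ a b1 b2 γ c j ω) * hq' a b1 b2 γ c (ω^2) := by
    rw [hre.deriv]
    refine mul_pos_of_mul_eq_pos_mul hK (normSq_nonneg K) ?_ hroot'
    rw [normSq_charPolyQ_I_mul]
    positivity
  exact ⟨left_ne_zero_of_mul hpos.ne', hpos⟩

/-- transversality: any differentiable branch of characteristic roots
through iω at τ* = τ^{(j)}(ω) crosses the imaginary axis with nonzero speed, and the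
sign of d(Re λ)/dτ at τ* agrees with the sign of h′(ω²). -/
theorem stmt9 (a b1 b2 γ c : ℝ)
    (ha : 0 < a) (hb1 : 0 < b1) (hb2 : 0 < b2) (hγ : 0 < γ) (hc : c ≠ 0)
    (j : ℕ) (ω : ℝ) (hω : 0 < ω)
    (hroot : hq a b1 b2 γ c (ω^2) = 0) (hroot' : hq' a b1 b2 γ c (ω^2) ≠ 0)
    (lamf : ℝ → ℂ) (s : Set ℝ) (hs : s ∈ nhds (tauJ a b1 b2 γ c j ω))
    (hdiff : ∀ τ ∈ s, DifferentiableAt ℝ lamf τ)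
    (hval : lamf (tauJ a b1 b2 γ c j ω) = Complex.I * (ω : ℂ))
    (hsol : ∀ τ ∈ s, charFun a b1 b2 γ c τ (lamf τ) = 0) :
    deriv (fun τ => (lamf τ).re) (tauJ a b1 b2 γ c j ω) ≠ 0 ∧
    0 < deriv (fun τ => (lamf τ).re) (tauJ a b1 b2 γ c j ω) * hq' a b1 b2 γ c (ω^2) :=
  stmt9_general a b1 b2 γ c hc j ω hω hroot hroot' lamf s hs hdiff hval hsol
end
end

section
/- Let a, b₁, b₂, γ be positive reals and c, τ real parameters. Then λ = 0 is a root of Δ_{c,τ} if and only if c²b₁b₂ = (ab₁+γ)(ab₂+γ). Moreover, if c²b₁b₂ = (ab₁+γ)(ab₂+γ), then λ = 0 is a simple root of Δ_{c,τ} (i.e. the λ-derivative of Δ_{c,τ} at 0 is nonzero) if and only if τ ≠ (b₁+b₂)/(2b₁b₂) − (a+b₁)/(2(γ+ab₁)) − (a+b₂)/(2(γ+ab₂)). -/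
/-! At `λ = 0` the exponential equals `1`, so `Δ(0) = D − c²b₁b₂` and
`Δ'(0) = C − c²(b₁+b₂) + 2c²b₁b₂τ`. On the locus `c²b₁b₂ = D` substitute `c² = D/(b₁b₂)`;
since `C/D = (a+b₁)/(ab₁+γ) + (a+b₂)/(ab₂+γ)`, this gives `Δ'(0) = 2D(τ − criticalDelay)` with `D > 0`. -/

noncomputable section

open Real

def criticalDelay (a b1 b2 γ : ℝ) : ℝ :=
  (b1+b2)/(2*b1*b2) - (a+b1)/(2*(γ+a*b1)) - (a+b2)/(2*(γ+a*b2))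

theorem charFun_zero (a b1 b2 γ c τ : ℝ) :
    charFun a b1 b2 γ c τ 0 = ((Dc a b1 b2 γ - c^2*b1*b2 : ℝ) : ℂ) := by
  simp only [charFun, Dc]
  push_cast
  simp

theorem hasDerivAt_charFun (a b1 b2 γ c τ : ℝ) (lam : ℂ) :
    HasDerivAt (charFun a b1 b2 γ c τ)
      ((2*lam + (a+b1 : ℝ)) * (lam^2 + (a+b2 : ℝ)*lam + (a*b2+γ : ℝ))
        + (lam^2 + (a+b1 : ℝ)*lam + (a*b1+γ : ℝ)) * (2*lam + (a+b2 : ℝ))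
        - (c^2 : ℝ) * ((2*lam + (b1 : ℝ) + (b2 : ℝ)) - 2*(τ : ℝ)*(lam + (b1 : ℝ))*(lam + (b2 : ℝ)))
          * Complex.exp ((-2) * lam * (τ : ℝ))) lam := by
  have quad (p q : ℂ) : HasDerivAt (fun z : ℂ => z^2 + p*z + q) (2*lam + p) lam := by
    simpa using ((hasDerivAt_pow 2 lam).add ((hasDerivAt_id lam).const_mul p)).add_const q
  have lin (p : ℂ) : HasDerivAt (fun z : ℂ => z + p) 1 lam := (hasDerivAt_id lam).add_const p
  have expo : HasDerivAt (fun z : ℂ => Complex.exp ((-2) * z * (τ : ℝ)))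
      (Complex.exp ((-2) * lam * (τ : ℝ)) * ((-2) * (τ : ℝ))) lam := by
    simpa using (((hasDerivAt_id lam).const_mul (-2 : ℂ)).mul_const ((τ : ℝ) : ℂ)).cexp
  exact (((quad ((a+b1 : ℝ) : ℂ) ((a*b1+γ : ℝ) : ℂ)).mul (quad ((a+b2 : ℝ) : ℂ) ((a*b2+γ : ℝ) : ℂ))).sub
    ((((lin ((b1 : ℝ) : ℂ)).const_mul ((c^2 : ℝ) : ℂ)).mul (lin ((b2 : ℝ) : ℂ))).mul expo)).congr_deriv
    (by simp only [Pi.mul_apply]; ring)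

theorem deriv_charFun_zero (a b1 b2 γ c τ : ℝ) :
    deriv (charFun a b1 b2 γ c τ) 0
      = ((Cc a b1 b2 γ - c^2*(b1+b2) + 2*c^2*b1*b2*τ : ℝ) : ℂ) := by
  rw [(hasDerivAt_charFun a b1 b2 γ c τ 0).deriv, Cc]
  push_cast
  simp only [mul_zero, zero_mul, Complex.exp_zero]
  ring

theorem deriv_charFun_zero_eq_mul_sub_criticalDelay {a b1 b2 γ c : ℝ} (τ : ℝ)
    (hb1 : b1 ≠ 0) (hb2 : b2 ≠ 0) (h1 : γ + a*b1 ≠ 0) (h2 : γ + a*b2 ≠ 0)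
    (hroot : c^2*b1*b2 = Dc a b1 b2 γ) :
    deriv (charFun a b1 b2 γ c τ) 0
      = ((2 * Dc a b1 b2 γ * (τ - criticalDelay a b1 b2 γ) : ℝ) : ℂ) := by
  have hc2 : c^2 = Dc a b1 b2 γ / (b1*b2) := by
    field_simp
    linarith
  rw [deriv_charFun_zero, hc2, Cc, Dc, criticalDelay]
  congr 1
  field_simp
  ring

/-- λ = 0 is a root of Δ_{c,τ} iff c²b₁b₂ = (ab₁+γ)(ab₂+γ); in that case
it is a simple root iff τ ≠ (b₁+b₂)/(2b₁b₂) − (a+b₁)/(2(γ+ab₁)) − (a+b₂)/(2(γ+ab₂)). -/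
theorem stmt10 (a b1 b2 γ c τ : ℝ)
    (ha : 0 < a) (hb1 : 0 < b1) (hb2 : 0 < b2) (hγ : 0 < γ) :
    (charFun a b1 b2 γ c τ 0 = 0 ↔ c^2*b1*b2 = (a*b1+γ)*(a*b2+γ)) ∧
    (c^2*b1*b2 = (a*b1+γ)*(a*b2+γ) →
      (deriv (charFun a b1 b2 γ c τ) 0 ≠ 0 ↔
        τ ≠ (b1+b2)/(2*b1*b2) - (a+b1)/(2*(γ+a*b1)) - (a+b2)/(2*(γ+a*b2)))) := by
  refine ⟨?_, fun hroot => ?_⟩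
  · rw [charFun_zero, Complex.ofReal_eq_zero, sub_eq_zero, Dc, eq_comm]
  · have hDpos : 0 < Dc a b1 b2 γ := by unfold Dc; positivity
    rw [deriv_charFun_zero_eq_mul_sub_criticalDelay τ hb1.ne' hb2.ne' (by positivity) (by positivity) hroot,
      Ne, Complex.ofReal_eq_zero, mul_eq_zero, sub_eq_zero, criticalDelay]
    simp [hDpos.ne']
end
end

section
/- Let a, b, γ be positive real numbers with b > (a² − a + 1)/3. Then the single FitzHugh–Nagumo neuron admits no nonconstant periodic solution: if (v, w) : ℝ → ℝ² is differentiable, satisfies v′(t) = −v(t)³ + (a+1)v(t)² − a·v(t) − w(t) and w′(t) = γ·v(t) − b·w(t) for all t, and is periodic with some period T > 0, then (v, w) is constant. -/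
/-- if b > (a² − a + 1)/3, then the single FitzHugh–Nagumo neuron
admits no nonconstant periodic solution. -/
theorem stmt16 (a b γ : ℝ) (ha : 0 < a) (hb : 0 < b) (hγ : 0 < γ)
    (hcond : b > (a^2 - a + 1)/3)
    (v w : ℝ → ℝ) (hv : Differentiable ℝ v) (hw : Differentiable ℝ w)
    (hveq : ∀ t, deriv v t = -(v t)^3 + (a+1)*(v t)^2 - a*(v t) - w t)
    (hweq : ∀ t, deriv w t = γ*(v t) - b*(w t))
    (T : ℝ) (hT : 0 < T)
    (hper : ∀ t, v (t + T) = v t ∧ w (t + T) = w t) :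
    ∀ s t, v s = v t ∧ w s = w t := by
  have hv' : ∀ t, HasDerivAt v (deriv v t) t := fun t => (hv t).hasDerivAt
  have hw' : ∀ t, HasDerivAt w (deriv w t) t := fun t => (hw t).hasDerivAt
  -- deriv v is differentiable with explicit second derivative
  have hdvfun : deriv v = fun t => -(v t)^3 + (a+1)*(v t)^2 - a*(v t) - w t :=
    funext hveq
  have hdd : ∀ t, HasDerivAt (deriv v)
      ((-3*(v t)^2 + 2*(a+1)*(v t) - a) * deriv v t - deriv w t) t := by
    intro t
    rw [hdvfun]
    have h1 : HasDerivAt (fun t => -(v t)^3 + (a+1)*(v t)^2 - a*(v t) - w t)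
        (-(3 * (v t)^2 * deriv v t) + (a+1)*(2 * (v t)^1 * deriv v t)
          - a * deriv v t - deriv w t) t := by
      exact ((((hv' t).pow 3).neg.add (((hv' t).pow 2).const_mul (a+1))).sub
        ((hv' t).const_mul a)).sub (hw' t)
    convert h1 using 1
    rw [hveq t]
    ring
  have hddiff : Differentiable ℝ (deriv v) := fun t => (hdd t).differentiableAt
  -- energy function
  set H : ℝ → ℝ := fun t => (deriv v t)^2/2 + γ*(v t)^2/2
      - b*(-(v t)^4/4 + (a+1)*(v t)^3/3 - a*(v t)^2/2) with hHdef
  have hH : ∀ t, HasDerivAt H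
      (((-3*(v t)^2 + 2*(a+1)*(v t) - a) - b) * (deriv v t)^2) t := by
    intro t
    have h1 : HasDerivAt H
        ((2 * (deriv v t)^1 * ((-3*(v t)^2 + 2*(a+1)*(v t) - a) * deriv v t - deriv w t))/2
          + γ*(2 * (v t)^1 * deriv v t)/2
          - b*(-(4 * (v t)^3 * deriv v t)/4 + (a+1)*(3 * (v t)^2 * deriv v t)/3
              - a*(2 * (v t)^1 * deriv v t)/2)) t := by
      exact ((((hdd t).pow 2).div_const 2).add
          (((((hv' t).pow 2).const_mul γ)).div_const 2)).sub
        ((((((hv' t).pow 4).neg.div_const 4).add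
          ((((hv' t).pow 3).const_mul (a+1)).div_const 3)).sub
          ((((hv' t).pow 2).const_mul a).div_const 2)).const_mul b)
    convert h1 using 1
    have hwv : w t = -(v t)^3 + (a+1)*(v t)^2 - a*(v t) - deriv v t := by
      have := hveq t; linarith
    rw [hweq t, hwv]
    ring
  have hHdiff : Differentiable ℝ H := fun t => (hH t).differentiableAt
  -- derivative of H nonpositive
  have hcoef : ∀ t, (-3*(v t)^2 + 2*(a+1)*(v t) - a) - b < 0 := by
    intro t
    nlinarith [sq_nonneg (3 * v t - (a+1))]
  have hHderiv : ∀ t, deriv H t = ((-3*(v t)^2 + 2*(a+1)*(v t) - a) - b) * (deriv v t)^2 :=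
    fun t => (hH t).deriv
  have hHanti : Antitone H := by
    apply antitone_of_deriv_nonpos hHdiff
    intro t
    rw [hHderiv t]
    exact mul_nonpos_of_nonpos_of_nonneg (le_of_lt (hcoef t)) (sq_nonneg _)
  -- H is T-periodic
  have hdvper : ∀ t, deriv v (t + T) = deriv v t := by
    intro t
    rw [hveq, hveq, (hper t).1, (hper t).2]
  have hHper : ∀ t, H (t + T) = H t := by
    intro t
    simp only [hHdef, hdvper t, (hper t).1]
  -- H periodic with any multiple
  have hHpern : ∀ (n : ℕ) t, H (t + n * T) = H t := by
    intro n
    induction n with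
    | zero => simp
    | succ k ih =>
      intro t
      have : t + (k + 1 : ℕ) * T = (t + k * T) + T := by push_cast; ring
      rw [this, hHper, ih]
  -- H is constant
  have hHconst : ∀ s t, H s = H t := by
    have key : ∀ s t : ℝ, s ≤ t → H s = H t := by
      intro s t hst
      obtain ⟨n, hn⟩ := exists_nat_gt ((t - s) / T)
      have hnT : t ≤ s + n * T := by
        have := (div_lt_iff₀ hT).1 hn
        linarith
      have h1 : H t ≤ H s := hHanti hst
      have h2 : H (s + n * T) ≤ H t := hHanti hnT
      rw [hHpern n s] at h2
      linarith
    intro s t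
    rcases le_total s t with h | h
    · exact key s t h
    · exact (key t s h).symm
  have hHzero : ∀ t, deriv H t = 0 := by
    have : H = fun _ => H 0 := funext fun t => hHconst t 0
    intro t
    rw [this]
    simp
  -- hence deriv v = 0
  have hdvzero : ∀ t, deriv v t = 0 := by
    intro t
    have h0 := hHzero t
    rw [hHderiv t] at h0
    have := hcoef t
    have hsq : (deriv v t)^2 = 0 := by
      rcases mul_eq_zero.1 h0 with h | h
      · exact absurd h (ne_of_lt this)
      · exact h
    exact pow_eq_zero_iff (by norm_num) |>.1 hsq
  have hvconst : ∀ s t, v s = v t := is_const_of_deriv_eq_zero hv hdvzero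
  intro s t
  refine ⟨hvconst s t, ?_⟩
  have hs := hveq s
  have ht := hveq t
  rw [hdvzero s] at hs
  rw [hdvzero t] at ht
  have hvv := hvconst s t
  rw [hvv] at hs
  linarith
end
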